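/- Let K be a complete nonarchimedean valued field, O its valuation ring, f : O^n → K^n a polynomial map with coefficients in O and |det Df| = 1 on O^n, and let g : O^n → ℝ≥0 be a function that is constant on every open ball of radius 1 (i.e. g(x) = g(x') whenever ‖x − x'‖ < 1). Define f_*(g)(y) = Σ_{x ∈ O^n, f(x) = y} g(x) (a finite sum). Then f_*(g) is constant on every open ball of radius 1 in f(O^n): if ‖y − y'‖ < 1 and both lie in f(O^n), then f_*(g)(y) = f_*(g)(y'). -/

import Mathlib

/-!
The map `f` is injective on every open unit ball of `𝒪ⁿ`, and it maps the open unit ball around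
`x` onto the open unit ball around `f x` (a multivariate Hensel lemma). Both rest on the Taylor
estimate `‖f b - f c - Df(a) (b - c)‖ ≤ max ‖b - a‖ ‖c - a‖ * ‖b - c‖` on `𝒪ⁿ`, which holds
because the Taylor remainder of a polynomial with integral coefficients is an integral
combination of products `(bᵢ - aᵢ or cᵢ - aᵢ) * (bⱼ - cⱼ)`, and on `‖Df(a)⁻¹ v‖ ≤ ‖v‖`, which
holds because `Df(a)` has integral entries and unit determinant. Hence sending `x` to the unique
point of the fibre over `y'` at distance `< 1` from `x` is a bijection between the fibres over `y`
and `y'`, along which `g` is constant.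
-/

open MvPolynomial Matrix
open scoped NNReal

namespace MvPolynomial

variable {R σ : Type*} [CommRing R]

theorem eval_sub_eval_mem_span (p : MvPolynomial σ R) (b c : σ → R) :
    eval b p - eval c p ∈ Ideal.span (Set.range (b - c)) := by
  induction p using MvPolynomial.induction_on with
  | C r => simp
  | add p q hp hq => simpa only [map_add, add_sub_add_comm] using add_mem hp hq
  | mul_X p l hp =>
    have key : eval b (p * X l) - eval c (p * X l)
        = (eval b p - eval c p) * b l + eval c p * (b - c) l := by
      simp only [map_mul, eval_X, Pi.sub_apply]; ring
    rw [key]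
    exact add_mem (Ideal.mul_mem_right _ _ hp)
      (Ideal.mul_mem_left _ _ (Ideal.subset_span (Set.mem_range_self l)))

theorem sum_eval_pderiv_mul_X_mul [Fintype σ] [DecidableEq σ] (p : MvPolynomial σ R) (l : σ)
    (a v : σ → R) :
    ∑ j, eval a (pderiv j (p * X l)) * v j =
      a l * ∑ j, eval a (pderiv j p) * v j + eval a p * v l := by
  simp only [pderiv_mul, pderiv_X, map_add, map_mul, eval_X, add_mul, Finset.sum_add_distrib,
    Finset.mul_sum]
  congr 1
  · exact Finset.sum_congr rfl fun j _ => by ring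
  · rw [Finset.sum_eq_single l (fun j _ hj => by simp [hj]) (by simp)]
    simp

theorem eval_sub_eval_sub_sum_pderiv_mem [Fintype σ] [DecidableEq σ] (p : MvPolynomial σ R)
    (a b c : σ → R) :
    eval b p - eval c p - ∑ j, eval a (pderiv j p) * (b j - c j) ∈
      (Ideal.span (Set.range (b - a)) ⊔ Ideal.span (Set.range (c - a))) *
        Ideal.span (Set.range (b - c)) := by
  induction p using MvPolynomial.induction_on with
  | C r => simp
  | add p q hp hq =>
    convert add_mem hp hq using 1
    simp only [map_add, add_mul, Finset.sum_add_distrib]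
    ring
  | mul_X p l hp =>
    have key : eval b (p * X l) - eval c (p * X l) -
          ∑ j, eval a (pderiv j (p * X l)) * (b j - c j)
        = a l * (eval b p - eval c p - ∑ j, eval a (pderiv j p) * (b j - c j))
          + (eval b p - eval a p) * (b - c) l + (c - a) l * (eval b p - eval c p) := by
      rw [sum_eval_pderiv_mul_X_mul]
      simp only [map_mul, eval_X, Pi.sub_apply]
      ring
    rw [key]
    refine add_mem (add_mem (Ideal.mul_mem_left _ _ hp) ?_) ?_
    · exact Ideal.mul_mem_mul (Ideal.mem_sup_left (eval_sub_eval_mem_span p b a))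
        (Ideal.subset_span (Set.mem_range_self l))
    · exact Ideal.mul_mem_mul (Ideal.mem_sup_right (Ideal.subset_span (Set.mem_range_self l)))
        (eval_sub_eval_mem_span p b c)

end MvPolynomial

theorem Valuation.leIdeal_mul_leIdeal_le {R Γ₀ : Type*} [CommRing R]
    [LinearOrderedCommGroupWithZero Γ₀] (v : Valuation R Γ₀) (γ δ : Γ₀) :
    v.leIdeal γ * v.leIdeal δ ≤ v.leIdeal (γ * δ) :=
  Ideal.mul_le.2 fun x hx y hy => by
    rw [mem_leIdeal_iff, Subring.coe_mul, map_mul]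
    exact mul_le_mul' hx hy

theorem Matrix.norm_mulVec_le_of_forall_norm_le_one {R m n : Type*} [NormedRing R]
    [IsUltrametricDist R] [Fintype m] [Fintype n] {M : Matrix m n R} (hM : ∀ i j, ‖M i j‖ ≤ 1)
    (v : n → R) :
    ‖M *ᵥ v‖ ≤ ‖v‖ :=
  (pi_norm_le_iff_of_nonneg (norm_nonneg v)).2 fun i =>
    IsUltrametricDist.norm_sum_le_of_forall_le_of_nonneg (norm_nonneg v) fun j _ =>
      (norm_mul_le _ _).trans (mul_le_of_le_one_left (norm_nonneg _) (hM i j) |>.trans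
        (norm_le_pi_norm v j))

namespace NormedField

variable {K : Type*} [NormedField K] [IsUltrametricDist K]

local notation "𝒪" => Valuation.integer (valuation (K := K))

theorem mem_valuation_integer_iff {x : K} : x ∈ 𝒪 ↔ ‖x‖ ≤ 1 := by
  rw [Valuation.mem_integer_iff, valuation_apply, ← NNReal.coe_le_coe, coe_nnnorm, NNReal.coe_one]

theorem coe_eval_integer {σ : Type*} (P : MvPolynomial σ 𝒪) (x : σ → 𝒪) :
    (eval x P : K) = eval (fun i => (x i : K)) (map (Subring.subtype 𝒪) P) := by
  rw [eval_map, ← eval₂_id, ← Subring.coe_subtype, eval₂_comp_left]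
  rfl

theorem exists_map_integer_eq {σ : Type*} {p : MvPolynomial σ K} (hp : ∀ m, ‖p.coeff m‖ ≤ 1) :
    ∃ P : MvPolynomial σ 𝒪, map (Subring.subtype 𝒪) P = p := by
  refine mem_range_map_iff_coeffs_subset.2 fun x hx => ?_
  obtain ⟨m, -, rfl⟩ := mem_coeffs_iff.1 hx
  exact ⟨⟨_, mem_valuation_integer_iff.2 (hp m)⟩, rfl⟩

theorem mem_valuation_integer_of_norm_le_one {σ : Type*} [Fintype σ] {x : σ → K}
    (hx : ‖x‖ ≤ 1) (i : σ) : x i ∈ 𝒪 :=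
  mem_valuation_integer_iff.2 ((norm_le_pi_norm x i).trans hx)

theorem norm_eval_sub_eval_sub_sum_pderiv_le {σ : Type*} [Fintype σ] [DecidableEq σ]
    {p : MvPolynomial σ K} (hp : ∀ m, ‖p.coeff m‖ ≤ 1) {a b c : σ → K}
    (ha : ‖a‖ ≤ 1) (hb : ‖b‖ ≤ 1) (hc : ‖c‖ ≤ 1) :
    ‖eval b p - eval c p - ∑ j, eval a (pderiv j p) * (b j - c j)‖ ≤
      max ‖b - a‖ ‖c - a‖ * ‖b - c‖ := by
  obtain ⟨P, rfl⟩ := exists_map_integer_eq hp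
  lift a to σ → 𝒪 using mem_valuation_integer_of_norm_le_one ha
  lift b to σ → 𝒪 using mem_valuation_integer_of_norm_le_one hb
  lift c to σ → 𝒪 using mem_valuation_integer_of_norm_le_one hc
  have hspan : ∀ x y : σ → 𝒪, Ideal.span (Set.range (x - y)) ≤
      valuation.leIdeal ‖(fun i => (x i : K)) - fun i => (y i : K)‖₊ := fun x y =>
    Ideal.span_le.2 (Set.range_subset_iff.2 fun i => nnnorm_le_pi_nnnorm
      ((fun i => (x i : K)) - fun i => (y i : K)) i)
  have hmem := Valuation.leIdeal_mul_leIdeal_le _ _ _ <| Ideal.mul_mono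
    (sup_le ((hspan b a).trans (Valuation.leIdeal_mono _ (le_max_left _ _)))
      ((hspan c a).trans (Valuation.leIdeal_mono _ (le_max_right _ _)))) (hspan b c)
    (eval_sub_eval_sub_sum_pderiv_mem P a b c)
  rw [Valuation.mem_leIdeal_iff, valuation_apply] at hmem
  push_cast [coe_eval_integer] at hmem
  simp only [pderiv_map]
  exact_mod_cast hmem

theorem norm_eval_pderiv_le_one {σ : Type*} [Fintype σ] [DecidableEq σ]
    {p : MvPolynomial σ K} (hp : ∀ m, ‖p.coeff m‖ ≤ 1) {a : σ → K} (ha : ‖a‖ ≤ 1) (j : σ) :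
    ‖eval a (pderiv j p)‖ ≤ 1 := by
  obtain ⟨P, rfl⟩ := exists_map_integer_eq hp
  lift a to σ → 𝒪 using mem_valuation_integer_of_norm_le_one ha
  rw [pderiv_map, ← coe_eval_integer]
  exact mem_valuation_integer_iff.1 (eval a (pderiv j P)).2

theorem _root_.Matrix.norm_inv_mulVec_le {ι : Type*} [Fintype ι] [DecidableEq ι]
    {M : Matrix ι ι K} (hM : ∀ i j, ‖M i j‖ ≤ 1) (hdet : ‖M.det‖ = 1) (v : ι → K) :
    ‖M⁻¹ *ᵥ v‖ ≤ ‖v‖ := by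
  refine Matrix.norm_mulVec_le_of_forall_norm_le_one (fun i j => ?_) v
  let M' : Matrix ι ι 𝒪 := Matrix.of fun i j => ⟨M i j, mem_valuation_integer_iff.2 (hM i j)⟩
  have hM' : (Subring.subtype 𝒪).mapMatrix M' = M := rfl
  rw [Matrix.inv_def, Matrix.smul_apply, smul_eq_mul, norm_mul, Ring.inverse_eq_inv', norm_inv,
    hdet, inv_one, one_mul, ← hM', ← RingHom.map_adjugate]
  exact mem_valuation_integer_iff.1 (M'.adjugate i j).2

end NormedField

section PolynomialMap

variable {R ι σ : Type*} [CommRing R]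

noncomputable def polyMap (f : ι → MvPolynomial σ R) (x : σ → R) : ι → R := fun i => eval x (f i)

noncomputable def polyJacobian [DecidableEq σ] (f : ι → MvPolynomial σ R) (x : σ → R) :
    Matrix ι σ R :=
  Matrix.of fun i j => eval x (pderiv j (f i))

end PolynomialMap

theorem isUnit_det_polyJacobian {K ι : Type*} [NormedField K] [Fintype ι] [DecidableEq ι]
    {f : ι → MvPolynomial ι K}
    (hJ : ∀ x, ‖x‖ ≤ 1 → ‖(polyJacobian f x).det‖ = 1) {x : ι → K} (hx : ‖x‖ ≤ 1) :
    IsUnit (polyJacobian f x).det :=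
  isUnit_iff_ne_zero.2 (norm_ne_zero_iff.1 (by rw [hJ x hx]; exact one_ne_zero))

section Ultrametric

variable {K ι : Type*} [NormedField K] [IsUltrametricDist K] [Fintype ι]

theorem norm_polyMap_sub_polyMap_sub_polyJacobian_mulVec_le {σ : Type*} [Fintype σ]
    [DecidableEq σ] {f : ι → MvPolynomial σ K} (hf : ∀ i m, ‖(f i).coeff m‖ ≤ 1)
    {a b c : σ → K} (ha : ‖a‖ ≤ 1) (hb : ‖b‖ ≤ 1) (hc : ‖c‖ ≤ 1) :
    ‖polyMap f b - polyMap f c - polyJacobian f a *ᵥ (b - c)‖ ≤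
      max ‖b - a‖ ‖c - a‖ * ‖b - c‖ :=
  (pi_norm_le_iff_of_nonneg (by positivity)).2 fun i => by
    simpa [polyMap, polyJacobian, Matrix.mulVec, dotProduct] using
      NormedField.norm_eval_sub_eval_sub_sum_pderiv_le (hf i) ha hb hc

variable [DecidableEq ι]

theorem norm_polyJacobian_inv_mulVec_le {f : ι → MvPolynomial ι K}
    (hf : ∀ i m, ‖(f i).coeff m‖ ≤ 1) {a : ι → K} (ha : ‖a‖ ≤ 1)
    (hdet : ‖(polyJacobian f a).det‖ = 1) (v : ι → K) :
    ‖(polyJacobian f a)⁻¹ *ᵥ v‖ ≤ ‖v‖ :=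
  Matrix.norm_inv_mulVec_le (fun i j => NormedField.norm_eval_pderiv_le_one (hf i) ha j) hdet v

theorem eq_of_polyMap_eq_of_norm_sub_lt_one {f : ι → MvPolynomial ι K}
    (hf : ∀ i m, ‖(f i).coeff m‖ ≤ 1)
    (hJ : ∀ x, ‖x‖ ≤ 1 → ‖(polyJacobian f x).det‖ = 1) {u w : ι → K} (hu : ‖u‖ ≤ 1)
    (hw : ‖w‖ ≤ 1) (huw : ‖w - u‖ < 1) (h : polyMap f u = polyMap f w) : u = w := by
  have hquad : ‖polyJacobian f u *ᵥ (w - u)‖ ≤ ‖w - u‖ * ‖w - u‖ := by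
    simpa [h] using norm_polyMap_sub_polyMap_sub_polyJacobian_mulVec_le hf hu hw hu
  have hlin : ‖w - u‖ ≤ ‖polyJacobian f u *ᵥ (w - u)‖ := by
    simpa [Matrix.mulVec_mulVec, Matrix.nonsing_inv_mul _ (isUnit_det_polyJacobian hJ hu)]
      using norm_polyJacobian_inv_mulVec_le hf hu (hJ u hu) (polyJacobian f u *ᵥ (w - u))
  have : ‖w - u‖ = 0 := by nlinarith [norm_nonneg (w - u)]
  exact (sub_eq_zero.1 (norm_eq_zero.1 this)).symm

/-- Newton's map with the Jacobian frozen at `x₀`: on the closed ball of radius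
`‖polyMap f x₀ - y‖ < 1` around `x₀` it is a contraction with that constant. -/
noncomputable def newtonMap (f : ι → MvPolynomial ι K) (x₀ y x : ι → K) : ι → K :=
  x - (polyJacobian f x₀)⁻¹ *ᵥ (polyMap f x - y)

theorem norm_newtonMap_sub_newtonMap_le {f : ι → MvPolynomial ι K}
    (hf : ∀ i m, ‖(f i).coeff m‖ ≤ 1) (hJ : ∀ x, ‖x‖ ≤ 1 → ‖(polyJacobian f x).det‖ = 1)
    {x₀ x x' : ι → K} (y : ι → K) (hx₀ : ‖x₀‖ ≤ 1) (hx : ‖x‖ ≤ 1) (hx' : ‖x'‖ ≤ 1) :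
    ‖newtonMap f x₀ y x - newtonMap f x₀ y x'‖ ≤ max ‖x - x₀‖ ‖x' - x₀‖ * ‖x - x'‖ := by
  set A := polyJacobian f x₀
  have hA := isUnit_det_polyJacobian hJ hx₀
  have : newtonMap f x₀ y x - newtonMap f x₀ y x' =
      -(A⁻¹ *ᵥ (polyMap f x - polyMap f x' - A *ᵥ (x - x'))) := by
    simp only [newtonMap, Matrix.mulVec_sub, Matrix.mulVec_mulVec, Matrix.nonsing_inv_mul _ hA,
      Matrix.one_mulVec, A]
    abel
  rw [this, norm_neg]
  exact (norm_polyJacobian_inv_mulVec_le hf hx₀ (hJ x₀ hx₀) _).trans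
    (norm_polyMap_sub_polyMap_sub_polyJacobian_mulVec_le hf hx₀ hx hx')

theorem exists_polyMap_eq_of_norm_sub_lt_one [CompleteSpace K] {f : ι → MvPolynomial ι K}
    (hf : ∀ i m, ‖(f i).coeff m‖ ≤ 1) (hJ : ∀ x, ‖x‖ ≤ 1 → ‖(polyJacobian f x).det‖ = 1)
    {x₀ y : ι → K} (hx₀ : ‖x₀‖ ≤ 1) (hy : ‖polyMap f x₀ - y‖ < 1) :
    ∃ z, ‖z‖ ≤ 1 ∧ polyMap f z = y ∧ ‖z - x₀‖ ≤ ‖polyMap f x₀ - y‖ := by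
  set ε := ‖polyMap f x₀ - y‖₊
  set T := newtonMap f x₀ y
  set s := Metric.closedBall x₀ ε
  have hs : ∀ x ∈ s, ‖x‖ ≤ 1 := fun x hx =>
    calc ‖x‖ = ‖(x - x₀) + x₀‖ := by rw [sub_add_cancel]
      _ ≤ max ‖x - x₀‖ ‖x₀‖ := IsUltrametricDist.norm_add_le_max _ _
      _ ≤ 1 := max_le ((mem_closedBall_iff_norm.1 hx).trans hy.le) hx₀
  have hT : ∀ x ∈ s, ∀ x' ∈ s, dist (T x) (T x') ≤ ε * dist x x' := fun x hx x' hx' => by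
    rw [dist_eq_norm, dist_eq_norm]
    exact (norm_newtonMap_sub_newtonMap_le hf hJ y hx₀ (hs x hx) (hs x' hx')).trans
      (by gcongr; exact max_le (mem_closedBall_iff_norm.1 hx) (mem_closedBall_iff_norm.1 hx'))
  have hmaps : Set.MapsTo T s s := fun x hx => by
    rw [mem_closedBall_iff_norm, ← sub_add_sub_cancel _ (T x₀)]
    refine (IsUltrametricDist.norm_add_le_max _ _).trans (max_le ?_ ?_)
    · rw [← dist_eq_norm]
      calc dist (T x) (T x₀) ≤ ε * dist x x₀ := hT x hx x₀ (Metric.mem_closedBall_self ε.2)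
        _ ≤ ε * 1 := by gcongr; exact (Metric.mem_closedBall.1 hx).trans hy.le
        _ = ε := mul_one _
    · simpa [T, newtonMap, ε] using norm_polyJacobian_inv_mulVec_le hf hx₀ (hJ x₀ hx₀) _
  have hcontr : ContractingWith ε (hmaps.restrict T s s) :=
    ⟨mod_cast hy, fun x x' => (LipschitzOnWith.of_dist_le_mul hT) x.2 x'.2⟩
  obtain ⟨z, hzs, hfix, -⟩ :=
    ContractingWith.exists_fixedPoint' Metric.isClosed_closedBall.isComplete hmaps hcontr
      (Metric.mem_closedBall_self ε.2) (edist_ne_top _ _)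
  have h0 : (polyJacobian f x₀)⁻¹ *ᵥ (polyMap f z - y) = 0 := sub_eq_self.1 hfix
  refine ⟨z, hs z hzs, sub_eq_zero.1 ?_, mem_closedBall_iff_norm.1 hzs⟩
  simpa [Matrix.mulVec_mulVec, Matrix.mul_nonsing_inv _ (isUnit_det_polyJacobian hJ hx₀)]
    using congrArg (polyJacobian f x₀ *ᵥ ·) h0

theorem existsUnique_polyMap_eq_norm_sub_lt_one [CompleteSpace K] {f : ι → MvPolynomial ι K}
    (hf : ∀ i m, ‖(f i).coeff m‖ ≤ 1) (hJ : ∀ x, ‖x‖ ≤ 1 → ‖(polyJacobian f x).det‖ = 1)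
    {x y : ι → K} (hx : ‖x‖ ≤ 1) (hxy : ‖polyMap f x - y‖ < 1) :
    ∃! z, (‖z‖ ≤ 1 ∧ polyMap f z = y) ∧ ‖x - z‖ < 1 := by
  obtain ⟨z, hz, hzy, hzx⟩ := exists_polyMap_eq_of_norm_sub_lt_one hf hJ hx hxy
  have hxz : dist x z < 1 := by rw [dist_comm, dist_eq_norm]; exact hzx.trans_lt hxy
  refine ⟨z, ⟨⟨hz, hzy⟩, by rwa [dist_eq_norm] at hxz⟩, ?_⟩
  rintro z' ⟨⟨hz', hz'y⟩, hxz'⟩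
  refine (eq_of_polyMap_eq_of_norm_sub_lt_one hf hJ hz hz' ?_ (hzy.trans hz'y.symm)).symm
  rw [← dist_eq_norm]
  exact (dist_triangle_max z' x z).trans_lt (max_lt (by rwa [dist_comm, dist_eq_norm]) hxz)

end Ultrametric

theorem finsum_mem_eq_of_existsUnique {α M : Type*} [AddCommMonoid M] {s t : Set α}
    {r : α → α → Prop} {g : α → M} (hr : ∀ x z, r x z → r z x) (hg : ∀ x z, r x z → g x = g z)
    (hst : ∀ x ∈ s, ∃! z, z ∈ t ∧ r x z) (hts : ∀ z ∈ t, ∃! x, x ∈ s ∧ r z x) :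
    ∑ᶠ x ∈ s, g x = ∑ᶠ z ∈ t, g z := by
  classical
  let e : α → α := fun x => if h : ∃ z, z ∈ t ∧ r x z then h.choose else x
  have he : ∀ x ∈ s, e x ∈ t ∧ r x (e x) := fun x hx => by
    simpa only [e, dif_pos (hst x hx).exists] using (hst x hx).exists.choose_spec
  refine finsum_mem_eq_of_bijOn e
    ⟨fun x hx => (he x hx).1, fun x₁ h₁ x₂ h₂ h => ?_, fun z hz => ?_⟩
    fun x hx => hg x (e x) (he x hx).2
  · exact (hts (e x₂) (he x₂ h₂).1).unique ⟨h₁, h ▸ hr _ _ (he x₁ h₁).2⟩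
      ⟨h₂, hr _ _ (he x₂ h₂).2⟩
  · obtain ⟨x, ⟨hx, hzx⟩, -⟩ := hts z hz
    exact ⟨x, hx, (hst x hx).unique (he x hx) ⟨hz, hr _ _ hzx⟩⟩

theorem pushforward_locally_constant_general
    (K : Type*) [NormedField K] [CompleteSpace K]
    (hna : ∀ x y : K, ‖x + y‖ ≤ max ‖x‖ ‖y‖)
    (n : ℕ) (f : Fin n → MvPolynomial (Fin n) K)
    (hcoeff : ∀ i, ∀ m : Fin n →₀ ℕ, ‖(f i).coeff m‖ ≤ 1)
    (hJ : ∀ x : Fin n → K, (∀ i, ‖x i‖ ≤ 1) →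
      ‖(Matrix.of fun i j => MvPolynomial.eval x (MvPolynomial.pderiv j (f i))).det‖ = 1)
    (g : (Fin n → K) → ℝ≥0)
    (hg : ∀ x x' : Fin n → K, ‖x - x'‖ < 1 → g x = g x')
    (y y' : Fin n → K)
    (hclose : ‖y - y'‖ < 1) :
    (∑ᶠ x ∈ {x : Fin n → K | (∀ i, ‖x i‖ ≤ 1) ∧
        (fun i => MvPolynomial.eval x (f i)) = y}, g x)
      = ∑ᶠ x ∈ {x : Fin n → K | (∀ i, ‖x i‖ ≤ 1) ∧
          (fun i => MvPolynomial.eval x (f i)) = y'}, g x := by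
  have := IsUltrametricDist.isUltrametricDist_of_forall_norm_add_le_max_norm hna
  have hunit : ∀ x : Fin n → K, ‖x‖ ≤ 1 ↔ ∀ i, ‖x i‖ ≤ 1 :=
    fun x => pi_norm_le_iff_of_nonneg zero_le_one
  have hJ' : ∀ x, ‖x‖ ≤ 1 → ‖(polyJacobian f x).det‖ = 1 := fun x hx => hJ x ((hunit x).1 hx)
  simp only [← hunit]
  refine finsum_mem_eq_of_existsUnique (r := fun x z => ‖x - z‖ < 1)
    (fun x z h => (norm_sub_rev z x).trans_lt h) hg ?_ ?_
  · rintro x ⟨hx, rfl⟩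
    exact existsUnique_polyMap_eq_norm_sub_lt_one hcoeff hJ' hx hclose
  · rintro x ⟨hx, rfl⟩
    exact existsUnique_polyMap_eq_norm_sub_lt_one hcoeff hJ' hx (by rwa [norm_sub_rev])

/-- the fiberwise sum of a function constant on open unit balls,
under a norm-one étale polynomial map, is again constant on open unit balls
within the image of the unit polydisc. -/
theorem pushforward_locally_constant
    (K : Type*) [NormedField K] [CompleteSpace K]
    (hna : ∀ x y : K, ‖x + y‖ ≤ max ‖x‖ ‖y‖)
    (n : ℕ) (f : Fin n → MvPolynomial (Fin n) K)
    (hcoeff : ∀ i, ∀ m : Fin n →₀ ℕ, ‖(f i).coeff m‖ ≤ 1)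
    (hJ : ∀ x : Fin n → K, (∀ i, ‖x i‖ ≤ 1) →
      ‖(Matrix.of fun i j => MvPolynomial.eval x (MvPolynomial.pderiv j (f i))).det‖ = 1)
    (g : (Fin n → K) → ℝ≥0)
    (hg : ∀ x x' : Fin n → K, ‖x - x'‖ < 1 → g x = g x')
    (hfin : ∀ y : Fin n → K,
      {x : Fin n → K | (∀ i, ‖x i‖ ≤ 1) ∧
        (fun i => MvPolynomial.eval x (f i)) = y}.Finite)
    (y y' : Fin n → K)
    (hy : y ∈ (fun x : Fin n → K => fun i => MvPolynomial.eval x (f i)) ''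
      {x | ∀ i, ‖x i‖ ≤ 1})
    (hy' : y' ∈ (fun x : Fin n → K => fun i => MvPolynomial.eval x (f i)) ''
      {x | ∀ i, ‖x i‖ ≤ 1})
    (hclose : ‖y - y'‖ < 1) :
    (∑ᶠ x ∈ {x : Fin n → K | (∀ i, ‖x i‖ ≤ 1) ∧
        (fun i => MvPolynomial.eval x (f i)) = y}, g x)
      = ∑ᶠ x ∈ {x : Fin n → K | (∀ i, ‖x i‖ ≤ 1) ∧
          (fun i => MvPolynomial.eval x (f i)) = y'}, g x :=
  pushforward_locally_constant_general K hna n f hcoeff hJ g hg y y' hclose
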